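/- dynA* with the reeval flag enabled and a dyn-monotonic and dyn-consistent dynamic heuristic never reopens states: no state is ever removed from the closed set during the execution. -/

import Mathlib

open scoped ENNReal Classical

/-! ## Transition systems -/

/-- A labeled transition: (origin, label, target). -/
abbrev Tran (S L : Type) := S × L × S

/-- A transition system with states `S`, labels `L`, a cost function,
a set of labeled transitions, an initial state and a set of goal states. -/
structure TransSys (S L : Type) where
  cost : L → NNReal
  trans : Set (Tran S L)
  init : S
  goal : Set S

namespace TransSys

variable {S L : Type}

/-- `IsPathFrom ts s π s'`: `π` is a path from `s` to `s'` in `ts`. -/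
inductive IsPathFrom (ts : TransSys S L) : S → List (Tran S L) → S → Prop
  | nil (s : S) : IsPathFrom ts s [] s
  | cons {s m e : S} {l : L} {π : List (Tran S L)} :
      (s, l, m) ∈ ts.trans → IsPathFrom ts m π e → IsPathFrom ts s ((s, l, m) :: π) e

/-- The cost of a path: sum of the costs of its labels. -/
def pathCost (ts : TransSys S L) (π : List (Tran S L)) : NNReal :=
  (π.map fun t => ts.cost t.2.1).sum

/-- A state is reachable if there is a path from the initial state to it. -/
def Reachable (ts : TransSys S L) (s : S) : Prop := ∃ π, ts.IsPathFrom ts.init π s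

/-- A solution is a path from the initial state to a goal state. -/
def Solution (ts : TransSys S L) (π : List (Tran S L)) : Prop :=
  ∃ s ∈ ts.goal, ts.IsPathFrom ts.init π s

def Solvable (ts : TransSys S L) : Prop := ∃ π, ts.Solution π

/-- `h*`: minimal cost of a path from `s` to a goal state (`∞` if none exists). -/
noncomputable def hstar (ts : TransSys S L) (s : S) : ℝ≥0∞ :=
  sInf {x : ℝ≥0∞ | ∃ π, ∃ g ∈ ts.goal, ts.IsPathFrom s π g ∧ x = (ts.pathCost π : ℝ≥0∞)}

/-- `g*`: minimal cost of a path from the initial state to `s` (`∞` if none exists). -/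
noncomputable def gstar (ts : TransSys S L) (s : S) : ℝ≥0∞ :=
  sInf {x : ℝ≥0∞ | ∃ π, ts.IsPathFrom ts.init π s ∧ x = (ts.pathCost π : ℝ≥0∞)}

end TransSys

/-! ## Information sources and dynamic heuristics -/

/-- An information source for a transition system (Definition 1). -/
structure InfoSource {S L : Type} (ts : TransSys S L) (I : Type) where
  initInfo : I
  update : I → Tran S L → I
  refine : I → S → I

namespace InfoSource

variable {S L I : Type} {ts : TransSys S L}

/-- `ReachWith σ i K`: information object `i` is obtained from the initial
information by updates/refinements, where `K` is the set consisting of the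
initial state together with all targets of used transitions, every refined state
lies in `K`, and the origin of every used transition lies in `K` (Definition 2). -/
inductive ReachWith (σ : InfoSource ts I) : I → Set S → Prop
  | base : ReachWith σ σ.initInfo {ts.init}
  | update {i : I} {K : Set S} {t : Tran S L} :
      ReachWith σ i K → t ∈ ts.trans → t.1 ∈ K →
      ReachWith σ (σ.update i t) (insert t.2.2 K)
  | refine {i : I} {K : Set S} {s : S} :
      ReachWith σ i K → s ∈ K → ReachWith σ (σ.refine i s) K

/-- An information object is reachable (Definition 2). -/
def ReachableInfo (σ : InfoSource ts I) (i : I) : Prop := ∃ K, σ.ReachWith i K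

end InfoSource

section HeuristicProps

variable {S L I : Type} (ts : TransSys S L) (σ : InfoSource ts I) (h : S → I → ℝ≥0∞)

def DynSafe : Prop := ∀ (s : S) (i : I), σ.ReachableInfo i → h s i = ⊤ → ts.hstar s = ⊤

def DynAdmissible : Prop := ∀ (s : S) (i : I), σ.ReachableInfo i → h s i ≤ ts.hstar s

def DynConsistent : Prop :=
  ∀ t ∈ ts.trans, ∀ i : I, σ.ReachableInfo i →
    h t.1 i ≤ (ts.cost t.2.1 : ℝ≥0∞) + h t.2.2 i

def DynGoalAware : Prop := ∀ s ∈ ts.goal, ∀ i : I, σ.ReachableInfo i → h s i = 0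

def DynMonotonic : Prop :=
  ∀ i : I, σ.ReachableInfo i →
    (∀ s : S, ∀ t ∈ ts.trans, h s i ≤ h s (σ.update i t)) ∧
    (∀ s s' : S, h s i ≤ h s (σ.refine i s'))

end HeuristicProps

/-! ## Progression sources -/

/-- A progression source (Definition 5). -/
structure ProgSource {S L : Type} (ts : TransSys S L) (J : Type) where
  initJ : J
  progress : J → Tran S L → J
  merge : J → J → J

/-- The progression-based information source built on a progression source
(Definition 7): per-state information, updated by progressing along a
transition and merging with existing information at the target. -/
noncomputable def progInfoSource {S L J : Type} (ts : TransSys S L) (p : ProgSource ts J) :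
    InfoSource ts (S → Option J) where
  initInfo := fun x => if x = ts.init then some p.initJ else none
  update := fun i t => fun x =>
    if x = t.2.2 then
      match i t.1 with
      | none => i t.2.2
      | some j =>
        match i t.2.2 with
        | none => some (p.progress j t)
        | some j' => some (p.merge (p.progress j t) j')
    else i x
  refine := fun i _ => i

/-- The parent source (Definition 6): per-state `g`-values and parent pointers. -/
noncomputable def parentSource {S L : Type} (ts : TransSys S L) :
    ProgSource ts (NNReal × Option (Tran S L)) where
  initJ := (0, none)
  progress := fun j t => (j.1 + ts.cost t.2.1, some t)
  merge := fun a b => if a.1 ≤ b.1 then a else b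

/-- `ParentChain par s π`: `π` is the sequence of transitions obtained by
following parent pointers backwards from `s` until a state whose stored
pointer is `⊥` (read forwards). -/
inductive ParentChain {S L : Type} (par : S → Option (NNReal × Option (Tran S L))) :
    S → List (Tran S L) → Prop
  | nil {s : S} {g : NNReal} : par s = some (g, none) → ParentChain par s []
  | cons {g : NNReal} {t : Tran S L} {π : List (Tran S L)} :
      par t.2.2 = some (g, some t) → ParentChain par t.1 π →
      ParentChain par t.2.2 (π ++ [t])

/-! ## The dynamic heuristic search framework (Algorithm 1) -/

/-- A configuration of the framework: the known states and one information
object per information source. -/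
structure FConfig (S : Type) {ι : Type} (I : ι → Type) where
  known : Set S
  infos : ∀ k, I k

/-- The (non-terminating) operations of the framework. -/
inductive FOp where
  | genUnknown
  | genKnown
  | refineOp
deriving DecidableEq

section Framework

variable {S L ι : Type} {I : ι → Type} (ts : TransSys S L) (σ : ∀ k, InfoSource ts (I k))

/-- One step of the framework, labeled by the operation performed. -/
inductive FStep : FConfig S I → FOp → FConfig S I → Prop
  | genUnknown {c : FConfig S I} {t : Tran S L} :
      t ∈ ts.trans → t.1 ∈ c.known → t.2.2 ∉ c.known →
      FStep c .genUnknown ⟨insert t.2.2 c.known, fun k => (σ k).update (c.infos k) t⟩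
  | genKnown {c : FConfig S I} {t : Tran S L} :
      t ∈ ts.trans → t.1 ∈ c.known → t.2.2 ∈ c.known →
      FStep c .genKnown ⟨c.known, fun k => (σ k).update (c.infos k) t⟩
  | refineStep {c : FConfig S I} {s : S} :
      s ∈ c.known →
      FStep c .refineOp ⟨c.known, fun k => (σ k).refine (c.infos k) s⟩

/-- The initial configuration of the framework. -/
def initFConfig : FConfig S I := ⟨{ts.init}, fun k => (σ k).initInfo⟩

/-- A configuration occurring in some finite execution of the framework. -/
def FReach (c : FConfig S I) : Prop :=
  Relation.ReflTransGen (fun a b => ∃ op, FStep ts σ a op b) (initFConfig ts σ) c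

/-- Applicability of the gen-unknown operation. -/
def GenUnknownApp (c : FConfig S I) : Prop :=
  ∃ t ∈ ts.trans, t.1 ∈ c.known ∧ t.2.2 ∉ c.known

/-- Applicability of decl-solvable: a goal state is known. -/
def DeclSolvableApp (c : FConfig S I) : Prop := ∃ s ∈ c.known, s ∈ ts.goal

/-- Applicability of decl-unsolvable: no goal state is known and
no transition leaves the known states. -/
def DeclUnsolvableApp (c : FConfig S I) : Prop :=
  (∀ s ∈ c.known, s ∉ ts.goal) ∧ ¬ GenUnknownApp ts c

end Framework

/-! ## dynA* (Algorithm 2) -/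

/-- An open-list entry: (state, g-entry, h-entry). -/
abbrev Entry (S : Type) := S × NNReal × ℝ≥0∞

/-- The f-value of an open-list entry. -/
noncomputable def fval {S : Type} (en : Entry S) : ℝ≥0∞ := (en.2.1 : ℝ≥0∞) + en.2.2

/-- A configuration of dynA*: known states, closed set, open queue, the parent
information (g-values and parent pointers, i.e. the information of σ_p) and the
information object of the heuristic's source σ_h. -/
structure AConfig (S L I : Type) where
  known : Set S
  closed : Set S
  openq : Multiset (Entry S)
  par : S → Option (NNReal × Option (Tran S L))
  info : I

/-- The g-value currently stored for a state. -/
noncomputable def gOf {S L I : Type} (c : AConfig S L I) (s : S) : NNReal :=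
  ((c.par s).map Prod.fst).getD 0

section DynAStar

variable {S L I : Type} (ts : TransSys S L) (σh : InfoSource ts I) (h : S → I → ℝ≥0∞)

/-- Updating the parent information along a transition `t` (the update of the
progression-based parent source σ_p): the target's pair becomes
`(g(origin)+cost, t)` unless the previously stored g-value is smaller. -/
noncomputable def parUpd (par : S → Option (NNReal × Option (Tran S L))) (t : Tran S L) :
    S → Option (NNReal × Option (Tran S L)) := fun x =>
  if x = t.2.2 then
    match par t.1 with
    | none => par t.2.2
    | some (g, _) =>
      match par t.2.2 with
      | none => some (g + ts.cost t.2.1, some t)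
      | some (g', p') =>
          if g + ts.cost t.2.1 ≤ g' then some (g + ts.cost t.2.1, some t)
          else some (g', p')
  else par x

/-- Processing one successor transition `t = (s, ℓ, s')` during the expansion of
`s`: record the old g-value (undefined iff `s'` unknown), update both information
objects along `t`, add `s'` to the known states, and insert `(s', g(s'), h(s'))`
into the open queue if `h(s') < ∞` and `s'` is new or reached more cheaply
(removing `s'` from closed in the latter case: reopening). -/
noncomputable def procSucc (c : AConfig S L I) (t : Tran S L) : AConfig S L I :=
  let oldg : Option NNReal := if t.2.2 ∈ c.known then some (gOf c t.2.2) else none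
  let par' := parUpd ts c.par t
  let info' := σh.update c.info t
  let c' : AConfig S L I :=
    { known := insert t.2.2 c.known, closed := c.closed, openq := c.openq,
      par := par', info := info' }
  let gnew : NNReal := ((par' t.2.2).map Prod.fst).getD 0
  let hnew : ℝ≥0∞ := h t.2.2 info'
  if hnew = ⊤ then c'
  else
    match oldg with
    | none => { c' with openq := (t.2.2, gnew, hnew) ::ₘ c.openq }
    | some go =>
      if gnew < go then
        { c' with closed := c.closed \ {t.2.2},
                  openq := (t.2.2, gnew, hnew) ::ₘ c.openq }
      else c'

/-- Expanding a state: process all its successor transitions in order. -/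
noncomputable def expandAll (c : AConfig S L I) (l : List (Tran S L)) : AConfig S L I :=
  l.foldl (procSucc ts σh h) c

/-- `l` enumerates (without repetition) exactly the transitions with origin `s`. -/
def SuccList (s : S) (l : List (Tran S L)) : Prop :=
  l.Nodup ∧ ∀ t : Tran S L, t ∈ l ↔ t ∈ ts.trans ∧ t.1 = s

/-- Labels recording what happened in one iteration of dynA*. -/
inductive ALab (S L : Type) where
  | dup (en : Entry S)
  | reev (en : Entry S)
  | expand (en : Entry S)
  | retGoal (en : Entry S) (π : List (Tran S L))
  | unsolv

/-- The entry popped from the open queue in an iteration, if any. -/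
def popped {S L : Type} : ALab S L → Option (Entry S)
  | .dup en => some en
  | .reev en => some en
  | .expand en => some en
  | .retGoal en _ => some en
  | .unsolv => none

/-- The outcome of one iteration of dynA*. -/
inductive AOut (S L I : Type) where
  | cont (c : AConfig S L I)
  | retPath (π : List (Tran S L))
  | unsolvable

/-- One iteration of dynA* (Algorithm 2), with optional re-evaluation.
An entry of minimal f-value is popped; duplicates (closed states) are discarded;
otherwise both information objects are refined on the popped state (σ_p's refine
is the identity, so `par` is unchanged); with `reeval` set, a state whose
heuristic value increased is re-inserted instead of expanded; expanding a goal
state returns the path obtained by following parent pointers; expanding a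
non-goal state processes all its successor transitions. If the open queue is
empty, 'unsolvable' is returned. -/
inductive AStep (reeval : Bool) : AConfig S L I → ALab S L → AOut S L I → Prop
  | dup {c : AConfig S L I} {en : Entry S} {rest : Multiset (Entry S)} :
      c.openq = en ::ₘ rest → (∀ en' ∈ c.openq, fval en ≤ fval en') →
      en.1 ∈ c.closed →
      AStep reeval c (.dup en) (.cont { c with openq := rest })
  | reevFin {c : AConfig S L I} {en : Entry S} {rest : Multiset (Entry S)} :
      c.openq = en ::ₘ rest → (∀ en' ∈ c.openq, fval en ≤ fval en') →
      en.1 ∉ c.closed → reeval = true →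
      en.2.2 < h en.1 (σh.refine c.info en.1) →
      h en.1 (σh.refine c.info en.1) ≠ ⊤ →
      AStep reeval c (.reev en)
        (.cont { c with info := σh.refine c.info en.1,
                        openq := (en.1, gOf c en.1, h en.1 (σh.refine c.info en.1)) ::ₘ rest })
  | reevInf {c : AConfig S L I} {en : Entry S} {rest : Multiset (Entry S)} :
      c.openq = en ::ₘ rest → (∀ en' ∈ c.openq, fval en ≤ fval en') →
      en.1 ∉ c.closed → reeval = true →
      en.2.2 < h en.1 (σh.refine c.info en.1) →
      h en.1 (σh.refine c.info en.1) = ⊤ →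
      AStep reeval c (.reev en)
        (.cont { c with info := σh.refine c.info en.1, openq := rest })
  | retGoal {c : AConfig S L I} {en : Entry S} {rest : Multiset (Entry S)}
      {π : List (Tran S L)} :
      c.openq = en ::ₘ rest → (∀ en' ∈ c.openq, fval en ≤ fval en') →
      en.1 ∉ c.closed →
      ¬(reeval = true ∧ en.2.2 < h en.1 (σh.refine c.info en.1)) →
      en.1 ∈ ts.goal → ParentChain c.par en.1 π →
      AStep reeval c (.retGoal en π) (.retPath π)
  | expand {c : AConfig S L I} {en : Entry S} {rest : Multiset (Entry S)}
      {l : List (Tran S L)} :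
      c.openq = en ::ₘ rest → (∀ en' ∈ c.openq, fval en ≤ fval en') →
      en.1 ∉ c.closed →
      ¬(reeval = true ∧ en.2.2 < h en.1 (σh.refine c.info en.1)) →
      en.1 ∉ ts.goal → SuccList ts en.1 l →
      AStep reeval c (.expand en)
        (.cont (expandAll ts σh h
          { c with openq := rest, closed := insert en.1 c.closed,
                   info := σh.refine c.info en.1 } l))
  | unsolv {c : AConfig S L I} :
      c.openq = 0 → AStep reeval c .unsolv .unsolvable

/-- The initial configuration of dynA*. -/
noncomputable def initAConfig : AConfig S L I where
  known := {ts.init}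
  closed := ∅
  openq :=
    if h ts.init σh.initInfo = ⊤ then 0 else {(ts.init, 0, h ts.init σh.initInfo)}
  par := fun x => if x = ts.init then some (0, none) else none
  info := σh.initInfo

/-- `IsExec ts σh h reeval e lab N`: `e 0, …, e N` are the configurations at the
beginnings of the iterations of an execution of dynA*, with `lab n` recording what
happened in iteration `n`. -/
def IsExec (reeval : Bool) (e : ℕ → AConfig S L I) (lab : ℕ → ALab S L) (N : ℕ) : Prop :=
  e 0 = initAConfig ts σh h ∧
  ∀ n < N, AStep ts σh h reeval (e n) (lab n) (.cont (e (n + 1)))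

/-- A state `s` is settled at iteration `n` if it was expanded in some earlier
iteration at whose beginning its stored g-value was `g*(s)`. -/
def SettledAt (e : ℕ → AConfig S L I) (lab : ℕ → ALab S L) (n : ℕ) (s : S) : Prop :=
  ∃ m < n, ∃ en : Entry S, lab m = .expand en ∧ en.1 = s ∧
    (gOf (e m) s : ℝ≥0∞) = ts.gstar s

/-- Iterated refinement of an information object on a fixed state. -/
def refIter (i : I) (s : S) : ℕ → I
  | 0 => i
  | n + 1 => σh.refine (refIter i s n) s

end DynAStar

section NoReopenProof

variable {S L I : Type} {ts : TransSys S L} {σh : InfoSource ts I} {h : S → I → ℝ≥0∞}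

lemma pathCost_nil : ts.pathCost ([] : List (Tran S L)) = 0 := rfl

lemma pathCost_cons (t : Tran S L) (π : List (Tran S L)) :
    ts.pathCost (t :: π) = ts.cost t.2.1 + ts.pathCost π := by
  simp [TransSys.pathCost]

lemma pathCost_append (π₁ π₂ : List (Tran S L)) :
    ts.pathCost (π₁ ++ π₂) = ts.pathCost π₁ + ts.pathCost π₂ := by
  simp [TransSys.pathCost]

lemma pathFrom_append {a b c' : S} {π₁ π₂ : List (Tran S L)}
    (h1 : ts.IsPathFrom a π₁ b) (h2 : ts.IsPathFrom b π₂ c') :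
    ts.IsPathFrom a (π₁ ++ π₂) c' := by
  induction h1 with
  | nil s => simpa using h2
  | cons ht hp ih => exact .cons ht (ih h2)

lemma pathFrom_snoc {a b : S} {π : List (Tran S L)} (hp : ts.IsPathFrom a π b)
    {t : Tran S L} (ht : t ∈ ts.trans) (hb : t.1 = b) :
    ts.IsPathFrom a (π ++ [t]) t.2.2 := by
  refine pathFrom_append hp ?_
  obtain ⟨x, l, y⟩ := t
  cases hb
  exact .cons ht (.nil _)

lemma reach_reachable {i : I} {K : Set S} (hr : σh.ReachWith i K) :
    σh.ReachableInfo i := ⟨K, hr⟩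

lemma h_mono_update (hmono : DynMonotonic ts σh h) {i : I} (hr : σh.ReachableInfo i)
    {t : Tran S L} (ht : t ∈ ts.trans) (x : S) : h x i ≤ h x (σh.update i t) :=
  (hmono i hr).1 x t ht

lemma h_mono_refine (hmono : DynMonotonic ts σh h) {i : I} (hr : σh.ReachableInfo i)
    (x s' : S) : h x i ≤ h x (σh.refine i s') :=
  (hmono i hr).2 x s'

lemma tele (hcons : DynConsistent ts σh h) {i : I} (hr : σh.ReachableInfo i)
    {v u : S} {π : List (Tran S L)} (hp : ts.IsPathFrom v π u) :
    h v i ≤ (ts.pathCost π : ℝ≥0∞) + h u i := by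
  induction hp with
  | nil s => simp [pathCost_nil]
  | cons ht hp ih =>
    refine le_trans (hcons _ ht i hr) ?_
    refine le_trans (add_le_add_right ih _) ?_
    rw [pathCost_cons]
    push_cast
    rw [add_assoc]

lemma gOf_eq {c : AConfig S L I} {u : S} {g : NNReal} {p : Option (Tran S L)}
    (hc : c.par u = some (g, p)) : gOf c u = g := by
  simp [gOf, hc, Option.getD]

lemma gOf_none {c : AConfig S L I} {u : S} (hc : c.par u = none) : gOf c u = 0 := by
  rw [gOf, hc]; rfl

lemma parUpd_ne {par : S → Option (NNReal × Option (Tran S L))} {t : Tran S L} {x : S}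
    (hx : x ≠ t.2.2) : parUpd ts par t x = par x := if_neg hx

/-- Omnibus spec for the value of `parUpd` at the target. -/
lemma parUpd_tgt_spec {par : S → Option (NNReal × Option (Tran S L))} {t : Tran S L}
    {g : NNReal} {p : Option (Tran S L)} (hs : par t.1 = some (g, p)) :
    ∃ q p2, parUpd ts par t t.2.2 = some (q, p2) ∧ q ≤ g + ts.cost t.2.1 ∧
      (∀ g' p', par t.2.2 = some (g', p') → q ≤ g' ∧ (q = g' ∨ q = g + ts.cost t.2.1)) ∧
      (par t.2.2 = none → q = g + ts.cost t.2.1) := by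
  rcases htgt : par t.2.2 with _ | ⟨g', p'⟩
  · refine ⟨g + ts.cost t.2.1, some t, ?_, le_refl _, ?_, fun _ => rfl⟩
    · simp [parUpd, hs, htgt]
    · intro g'' p'' hgp; cases hgp
  · by_cases hle : g + ts.cost t.2.1 ≤ g'
    · refine ⟨g + ts.cost t.2.1, some t, ?_, le_refl _, ?_, ?_⟩
      · simp [parUpd, hs, htgt, hle]
      · intro g'' p'' hgp
        obtain ⟨rfl, rfl⟩ : g' = g'' ∧ p' = p'' := by
          simpa [Prod.ext_iff] using hgp
        exact ⟨hle, Or.inr rfl⟩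
      · intro hn; cases hn
    · refine ⟨g', p', ?_, le_of_lt (lt_of_not_ge hle), ?_, ?_⟩
      · simp [parUpd, hs, htgt, hle]
      · intro g'' p'' hgp
        obtain ⟨rfl, rfl⟩ : g' = g'' ∧ p' = p'' := by
          simpa [Prod.ext_iff] using hgp
        exact ⟨le_refl _, Or.inl rfl⟩
      · intro hn; cases hn

end NoReopenProof

/-- The master invariant maintained by dynA* with re-evaluation. -/
structure AInv {S L I : Type} (ts : TransSys S L) (σh : InfoSource ts I)
    (h : S → I → ℝ≥0∞) (c : AConfig S L I) : Prop where
  kinit : ts.init ∈ c.known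
  gzero : gOf c ts.init = 0
  reach : σh.ReachWith c.info c.known
  parKnown : ∀ u, u ∈ c.known ↔ (c.par u).isSome
  closedKnown : c.closed ⊆ c.known
  gpath : ∀ u ∈ c.known, ∃ π, ts.IsPathFrom ts.init π u ∧ ts.pathCost π = gOf c u
  gclosed : ∀ u ∈ c.closed,
      (∀ π, ts.IsPathFrom ts.init π u → (gOf c u : ℝ≥0∞) ≤ (ts.pathCost π : ℝ≥0∞)) ∨
        h u c.info = ⊤
  locCons : ∀ w ∈ c.closed, ∀ t ∈ ts.trans, t.1 = w →
      (t.2.2 ∈ c.known ∧ gOf c t.2.2 ≤ gOf c w + ts.cost t.2.1) ∨ h w c.info = ⊤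
  openInv : ∀ x ∈ c.known, x ∉ c.closed →
      (∃ en ∈ c.openq, en.1 = x ∧ en.2.1 = gOf c x ∧ en.2.2 ≤ h x c.info) ∨
        h x c.info = ⊤
  entries : ∀ en ∈ c.openq, en.1 ∈ c.known ∧ gOf c en.1 ≤ en.2.1 ∧ en.2.2 ≠ ⊤

section NoReopenProof2

variable {S L I : Type} {ts : TransSys S L} {σh : InfoSource ts I} {h : S → I → ℝ≥0∞}
  {c : AConfig S L I}

lemma walk (hc : AInv ts σh h c) :
    ∀ {π : List (Tran S L)} {w u : S}, ts.IsPathFrom w π u → w ∈ c.known →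
      (u ∈ c.known ∧ (gOf c u : ℝ≥0∞) ≤ (gOf c w : ℝ≥0∞) + (ts.pathCost π : ℝ≥0∞)) ∨
      (∃ v πa πb, π = πa ++ πb ∧ ts.IsPathFrom v πb u ∧
          (gOf c v : ℝ≥0∞) ≤ (gOf c w : ℝ≥0∞) + (ts.pathCost πa : ℝ≥0∞) ∧
          ∃ en ∈ c.openq, en.1 = v ∧ en.2.1 = gOf c v ∧ en.2.2 ≤ h v c.info) ∨
      (∃ v πa πb, π = πa ++ πb ∧ ts.IsPathFrom v πb u ∧ h v c.info = ⊤) := by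
  intro π w u hp
  induction hp with
  | nil s => intro hw; exact Or.inl ⟨hw, by simp [pathCost_nil]⟩
  | @cons s m e l π' ht hp ih =>
    intro hw
    by_cases hcl : s ∈ c.closed
    · rcases hc.locCons s hcl (s, l, m) ht rfl with ⟨hmK, hg⟩ | htop
      · have harith : ((gOf c m : ℝ≥0∞)) ≤ (gOf c s : ℝ≥0∞) + (ts.cost l : ℝ≥0∞) := by
          rw [← ENNReal.coe_add]; exact ENNReal.coe_le_coe.2 hg
        rcases ih hmK with ⟨huK, hle⟩ | ⟨v, πa, πb, rfl, hpb, hva, hen⟩ |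
            ⟨v, πa, πb, rfl, hpb, htop⟩
        · refine Or.inl ⟨huK, ?_⟩
          calc (gOf c e : ℝ≥0∞) ≤ (gOf c m : ℝ≥0∞) + ts.pathCost π' := hle
            _ ≤ ((gOf c s : ℝ≥0∞) + ts.cost l) + ts.pathCost π' :=
                add_le_add_left harith _
            _ = (gOf c s : ℝ≥0∞) + ts.pathCost ((s, l, m) :: π') := by
                rw [pathCost_cons]; push_cast; rw [add_assoc]
        · refine Or.inr (Or.inl ⟨v, (s, l, m) :: πa, πb, by simp, hpb, ?_, hen⟩)
          calc (gOf c v : ℝ≥0∞) ≤ (gOf c m : ℝ≥0∞) + ts.pathCost πa := hva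
            _ ≤ ((gOf c s : ℝ≥0∞) + ts.cost l) + ts.pathCost πa :=
                add_le_add_left harith _
            _ = (gOf c s : ℝ≥0∞) + ts.pathCost ((s, l, m) :: πa) := by
                rw [pathCost_cons]; push_cast; rw [add_assoc]
        · exact Or.inr (Or.inr ⟨v, (s, l, m) :: πa, πb, by simp, hpb, htop⟩)
      · exact Or.inr (Or.inr ⟨s, [], (s, l, m) :: π', by simp, .cons ht hp, htop⟩)
    · rcases hc.openInv s hw hcl with hwit | htop
      · refine Or.inr (Or.inl ⟨s, [], (s, l, m) :: π', by simp, .cons ht hp, ?_, hwit⟩)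
        simp [pathCost_nil]
      · exact Or.inr (Or.inr ⟨s, [], (s, l, m) :: π', by simp, .cons ht hp, htop⟩)

lemma noCheap (hmono : DynMonotonic ts σh h) (hcons : DynConsistent ts σh h)
    (hc : AInv ts σh h c) {en : Entry S}
    (hmin : ∀ en' ∈ c.openq, fval en ≤ fval en') (henq : en ∈ c.openq)
    (hre : h en.1 (σh.refine c.info en.1) ≤ en.2.2) :
    ∀ π, ts.IsPathFrom ts.init π en.1 → (gOf c en.1 : ℝ≥0∞) ≤ (ts.pathCost π : ℝ≥0∞) := by
  intro π hπ
  obtain ⟨hsK, hgle, hentop⟩ := hc.entries en henq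
  have hreachi : σh.ReachableInfo c.info := ⟨_, hc.reach⟩
  have hreachi' : σh.ReachableInfo (σh.refine c.info en.1) :=
    ⟨_, hc.reach.refine hsK⟩
  have hi'top : h en.1 (σh.refine c.info en.1) ≠ ⊤ := by
    intro hcontr
    exact hentop (top_le_iff.1 (hcontr ▸ hre))
  rcases walk hc hπ hc.kinit with ⟨_, hle⟩ | ⟨v, πa, πb, rfl, hpb, hva, en_v, henv, hv1, hv2, hv3⟩ |
      ⟨v, πa, πb, rfl, hpb, htop⟩
  · simpa [hc.gzero] using hle
  · have hfen : (gOf c en.1 : ℝ≥0∞) + h en.1 (σh.refine c.info en.1) ≤ fval en :=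
      add_le_add (ENNReal.coe_le_coe.2 hgle) hre
    have h2 : fval en ≤ fval en_v := hmin en_v henv
    have h3 : fval en_v ≤ (ts.pathCost πa : ℝ≥0∞) + h v c.info := by
      have : (en_v.2.1 : ℝ≥0∞) ≤ (ts.pathCost πa : ℝ≥0∞) := by
        rw [hv2]
        simpa [hc.gzero] using hva
      exact add_le_add this hv3
    have h4 : h v c.info ≤ h v (σh.refine c.info en.1) := h_mono_refine hmono hreachi v en.1
    have h5 : h v (σh.refine c.info en.1) ≤
        (ts.pathCost πb : ℝ≥0∞) + h en.1 (σh.refine c.info en.1) := tele hcons hreachi' hpb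
    have hchain : (gOf c en.1 : ℝ≥0∞) + h en.1 (σh.refine c.info en.1) ≤
        (ts.pathCost (πa ++ πb) : ℝ≥0∞) + h en.1 (σh.refine c.info en.1) := by
      calc (gOf c en.1 : ℝ≥0∞) + h en.1 (σh.refine c.info en.1) ≤ fval en_v :=
            le_trans hfen h2
        _ ≤ (ts.pathCost πa : ℝ≥0∞) + h v c.info := h3
        _ ≤ (ts.pathCost πa : ℝ≥0∞) + h v (σh.refine c.info en.1) := add_le_add_right h4 _
        _ ≤ (ts.pathCost πa : ℝ≥0∞) +
              ((ts.pathCost πb : ℝ≥0∞) + h en.1 (σh.refine c.info en.1)) :=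
            add_le_add_right h5 _
        _ = (ts.pathCost (πa ++ πb) : ℝ≥0∞) + h en.1 (σh.refine c.info en.1) := by
            rw [pathCost_append]; push_cast; rw [add_assoc]
    exact (ENNReal.add_le_add_iff_right hi'top).1 hchain
  · have h6 : h v (σh.refine c.info en.1) = ⊤ :=
      top_le_iff.1 (htop ▸ h_mono_refine hmono hreachi v en.1)
    have h5 : h v (σh.refine c.info en.1) ≤
        (ts.pathCost πb : ℝ≥0∞) + h en.1 (σh.refine c.info en.1) := tele hcons hreachi' hpb
    rw [h6, top_le_iff] at h5
    exact absurd h5 (ENNReal.add_ne_top.2 ⟨ENNReal.coe_ne_top, hi'top⟩)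

end NoReopenProof2

section ProcSuccScenarios

variable {S L I : Type} {ts : TransSys S L} {σh : InfoSource ts I} {h : S → I → ℝ≥0∞}
  {d : AConfig S L I} {t : Tran S L}

lemma procSucc_top (htop : h t.2.2 (σh.update d.info t) = ⊤) :
    procSucc ts σh h d t =
      ⟨insert t.2.2 d.known, d.closed, d.openq, parUpd ts d.par t, σh.update d.info t⟩ := by
  simp [procSucc, htop]

lemma procSucc_new (htop : h t.2.2 (σh.update d.info t) ≠ ⊤) (hk : t.2.2 ∉ d.known) :
    procSucc ts σh h d t =
      ⟨insert t.2.2 d.known, d.closed,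
        (t.2.2, ((parUpd ts d.par t t.2.2).map Prod.fst).getD 0,
          h t.2.2 (σh.update d.info t)) ::ₘ d.openq,
        parUpd ts d.par t, σh.update d.info t⟩ := by
  simp [procSucc, htop, hk]; rfl

lemma procSucc_known_lt (htop : h t.2.2 (σh.update d.info t) ≠ ⊤) (hk : t.2.2 ∈ d.known)
    (hlt : ((parUpd ts d.par t t.2.2).map Prod.fst).getD 0 < gOf d t.2.2) :
    procSucc ts σh h d t =
      ⟨insert t.2.2 d.known, d.closed \ {t.2.2},
        (t.2.2, ((parUpd ts d.par t t.2.2).map Prod.fst).getD 0,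
          h t.2.2 (σh.update d.info t)) ::ₘ d.openq,
        parUpd ts d.par t, σh.update d.info t⟩ := by
  simp [procSucc, htop, hk, hlt]

lemma procSucc_known_ge (htop : h t.2.2 (σh.update d.info t) ≠ ⊤) (hk : t.2.2 ∈ d.known)
    (hge : ¬ ((parUpd ts d.par t t.2.2).map Prod.fst).getD 0 < gOf d t.2.2) :
    procSucc ts σh h d t =
      ⟨insert t.2.2 d.known, d.closed, d.openq, parUpd ts d.par t, σh.update d.info t⟩ := by
  simp [procSucc, htop, hk, hge]

end ProcSuccScenarios

/-- Invariant relating the configuration `c` at the beginning of an expansion of `s`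
to the intermediate configurations `d` produced while processing successors. -/
structure DInv {S L I : Type} (ts : TransSys S L) (σh : InfoSource ts I)
    (h : S → I → ℝ≥0∞) (c : AConfig S L I) (s : S) (d : AConfig S L I) : Prop where
  closedEq : d.closed = insert s c.closed
  knownMono : c.known ⊆ d.known
  kinit : ts.init ∈ d.known
  gzero : gOf d ts.init = 0
  closedKnown : d.closed ⊆ d.known
  parKnown : ∀ u, u ∈ d.known ↔ (d.par u).isSome
  reach : σh.ReachWith d.info d.known
  gsEq : (d.par s).map Prod.fst = (c.par s).map Prod.fst
  parMono : ∀ u g p, c.par u = some (g, p) → ∃ g' p', d.par u = some (g', p') ∧ g' ≤ g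
  hmonoAll : ∀ x, h x c.info ≤ h x d.info
  gclosedStable : ∀ u ∈ c.closed, gOf d u = gOf c u ∨ h u d.info = ⊤
  gpath : ∀ u ∈ d.known, ∃ π, ts.IsPathFrom ts.init π u ∧ ts.pathCost π = gOf d u
  openInv : ∀ x ∈ d.known, x ∉ d.closed →
      (∃ en ∈ d.openq, en.1 = x ∧ en.2.1 = gOf d x ∧ en.2.2 ≤ h x d.info) ∨ h x d.info = ⊤
  entries : ∀ en ∈ d.openq, en.1 ∈ d.known ∧ gOf d en.1 ≤ en.2.1 ∧ en.2.2 ≠ ⊤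

section NoReopenProof3

variable {S L I : Type} {ts : TransSys S L} {σh : InfoSource ts I} {h : S → I → ℝ≥0∞}
  {c : AConfig S L I} {s : S}

lemma pathCost_single (t : Tran S L) : ts.pathCost [t] = ts.cost t.2.1 := by
  simp [TransSys.pathCost]

lemma procSucc_spec (hmono : DynMonotonic ts σh h)
    (hc : AInv ts σh h c) (hsK : s ∈ c.known) (hscl : s ∉ c.closed)
    (HB : ∀ t : Tran S L, t ∈ ts.trans → t.1 = s → t.2.2 ∈ c.closed →
      h t.2.2 c.info ≠ ⊤ → gOf c t.2.2 ≤ gOf c s + ts.cost t.2.1)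
    {d : AConfig S L I} (hd : DInv ts σh h c s d) {t : Tran S L}
    (ht : t ∈ ts.trans) (ht1 : t.1 = s) :
    DInv ts σh h c s (procSucc ts σh h d t) ∧
    (∀ u g p, d.par u = some (g, p) →
      ∃ g' p', (procSucc ts σh h d t).par u = some (g', p') ∧ g' ≤ g) ∧
    (∃ g' p', (procSucc ts σh h d t).par t.2.2 = some (g', p') ∧
      g' ≤ gOf c s + ts.cost t.2.1) ∧
    t.2.2 ∈ (procSucc ts σh h d t).known := by
  classical
  -- basic objects
  obtain ⟨gcs, pcs, hcs⟩ : ∃ g p, c.par s = some (g, p) := by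
    rcases Option.isSome_iff_exists.1 ((hc.parKnown s).1 hsK) with ⟨⟨g, p⟩, hg⟩
    exact ⟨g, p, hg⟩
  have hgcs : gOf c s = gcs := gOf_eq hcs
  obtain ⟨gds, pds, hds⟩ : ∃ g p, d.par s = some (g, p) := by
    rcases Option.isSome_iff_exists.1 ((hd.parKnown s).1 (hd.knownMono hsK)) with ⟨⟨g, p⟩, hg⟩
    exact ⟨g, p, hg⟩
  have hgds : gds = gcs := by
    have h2 := hd.gsEq
    rw [hds, hcs] at h2
    simp only [Option.map_some] at h2
    exact Option.some.inj h2
  have hdt1 : d.par t.1 = some (gds, pds) := by rw [ht1]; exact hds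
  obtain ⟨q, p2, hq, hqle, hsome, hnone⟩ := parUpd_tgt_spec (ts := ts) hdt1
  have hgq : gOf ⟨insert t.2.2 d.known, d.closed, d.openq, parUpd ts d.par t,
      σh.update d.info t⟩ t.2.2 = q := gOf_eq hq
  have hgnew : ((parUpd ts d.par t t.2.2).map Prod.fst).getD 0 = q := by
    rw [hq]; rfl
  have hreachd : σh.ReachableInfo d.info := ⟨_, hd.reach⟩
  -- parUpd-level facts, independent of the scenario
  have hstep_parMono : ∀ u g p, d.par u = some (g, p) →
      ∃ g' p', parUpd ts d.par t u = some (g', p') ∧ g' ≤ g := by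
    intro u g p hu
    by_cases hx : u = t.2.2
    · subst hx
      exact ⟨q, p2, hq, (hsome g p hu).1⟩
    · exact ⟨g, p, by rw [parUpd_ne hx]; exact hu, le_refl _⟩
  have hparMono' : ∀ u g p, c.par u = some (g, p) →
      ∃ g' p', parUpd ts d.par t u = some (g', p') ∧ g' ≤ g := by
    intro u g p hu
    obtain ⟨g1, p1, hg1, hle1⟩ := hd.parMono u g p hu
    obtain ⟨g2, p2', hg2, hle2⟩ := hstep_parMono u g1 p1 hg1
    exact ⟨g2, p2', hg2, le_trans hle2 hle1⟩
  have hparKnown' : ∀ u, u ∈ insert t.2.2 d.known ↔ ((parUpd ts d.par t) u).isSome := by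
    intro u
    by_cases hx : u = t.2.2
    · subst hx
      simp [hq]
    · rw [parUpd_ne hx]
      simp only [Set.mem_insert_iff, hx, false_or]
      exact hd.parKnown u
  have hgsEq' : ((parUpd ts d.par t) s).map Prod.fst = (c.par s).map Prod.fst := by
    by_cases hx : s = t.2.2
    · have hqs : q = gds := by
        have hds' : d.par t.2.2 = some (gds, pds) := by rw [← hx]; exact hds
        rcases hsome gds pds hds' with ⟨hqle', heq⟩
        rcases heq with heq | heq
        · exact heq
        · exact le_antisymm hqle' (by rw [heq]; exact le_self_add)
      rw [← hx] at hq
      rw [hq, hcs, hqs, hgds]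
      rfl
    · rw [parUpd_ne (fun hc' => hx hc')]
      exact hd.gsEq
  have hmonoAll' : ∀ x, h x c.info ≤ h x (σh.update d.info t) := fun x =>
    le_trans (hd.hmonoAll x) (h_mono_update hmono hreachd ht x)
  have hreach' : σh.ReachWith (σh.update d.info t) (insert t.2.2 d.known) :=
    hd.reach.update ht (by rw [ht1]; exact hd.knownMono hsK)
  have hgzero' : ((parUpd ts d.par t ts.init).map Prod.fst).getD 0 = 0 := by
    by_cases hx : ts.init = t.2.2
    · obtain ⟨g0, p0, h0⟩ : ∃ g p, d.par ts.init = some (g, p) := by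
        rcases Option.isSome_iff_exists.1 ((hd.parKnown ts.init).1 hd.kinit) with ⟨⟨g, p⟩, hg⟩
        exact ⟨g, p, hg⟩
      have hg00 : g0 = 0 := by
        have := hd.gzero
        rw [gOf_eq h0] at this
        exact this
      have h0' : d.par t.2.2 = some (g0, p0) := by rw [← hx]; exact h0
      have hq0 : q ≤ 0 := hg00 ▸ (hsome g0 p0 h0').1
      have : parUpd ts d.par t ts.init = some (q, p2) := by rw [hx]; exact hq
      rw [this]
      exact le_antisymm hq0 zero_le
    · rw [parUpd_ne hx]
      exact hd.gzero
  have hgpath' : ∀ u ∈ insert t.2.2 d.known,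
      ∃ π, ts.IsPathFrom ts.init π u ∧
        ts.pathCost π = ((parUpd ts d.par t u).map Prod.fst).getD 0 := by
    intro u hu
    by_cases hx : u = t.2.2
    · subst hx
      rw [hq]
      show ∃ π, _ ∧ ts.pathCost π = q
      by_cases hqc : q = gds + ts.cost t.2.1
      · obtain ⟨πs, hπs, hπc⟩ := hd.gpath s (hd.knownMono hsK)
        refine ⟨πs ++ [t], pathFrom_snoc hπs ht ht1, ?_⟩
        rw [pathCost_append, pathCost_single, hπc, gOf_eq hds, hqc]
      · rcases hom : d.par t.2.2 with _ | ⟨gu, pu⟩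
        · exact absurd (hnone hom) hqc
        · have hqu : q = gu := by
            rcases (hsome gu pu hom).2 with heq | heq
            · exact heq
            · exact absurd heq hqc
          have huk : t.2.2 ∈ d.known := (hd.parKnown t.2.2).2 (by rw [hom]; rfl)
          obtain ⟨π, hπ, hπc⟩ := hd.gpath t.2.2 huk
          exact ⟨π, hπ, by rw [hπc, gOf_eq hom, hqu]⟩
    · rw [parUpd_ne hx]
      rcases hu with hu | hu
      · exact absurd hu hx
      · exact hd.gpath u hu
  -- the KEY fact: if the target is closed and its heuristic value is finite,
  -- then its g-value does not change.
  have hKEY : t.2.2 ∈ c.closed → h t.2.2 (σh.update d.info t) ≠ ⊤ →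
      q = gOf d t.2.2 ∧ gOf d t.2.2 = gOf c t.2.2 := by
    intro hucl htop
    have hcif : h t.2.2 c.info ≠ ⊤ := by
      intro hcontr
      exact htop (top_le_iff.1 (hcontr ▸ hmonoAll' t.2.2))
    have hBB : gOf c t.2.2 ≤ gOf c s + ts.cost t.2.1 := HB t ht ht1 hucl hcif
    obtain ⟨gcu, pcu, hcu⟩ : ∃ g p, c.par t.2.2 = some (g, p) := by
      rcases Option.isSome_iff_exists.1 ((hc.parKnown t.2.2).1 (hc.closedKnown hucl)) with
        ⟨⟨g, p⟩, hg⟩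
      exact ⟨g, p, hg⟩
    obtain ⟨gdu, pdu, hdu, hledu⟩ := hd.parMono t.2.2 gcu pcu hcu
    have hstable : gOf d t.2.2 = gOf c t.2.2 := by
      rcases hd.gclosedStable t.2.2 hucl with hst | hst
      · exact hst
      · exact absurd (top_le_iff.1 (hst ▸ h_mono_update hmono hreachd ht t.2.2)) htop
    have hgdu : gOf d t.2.2 = gdu := gOf_eq hdu
    refine ⟨?_, hstable⟩
    rcases (hsome gdu pdu hdu).2 with heq | heq
    · rw [heq, hgdu]
    · -- q = gds + cost; then q ≥ gOf c t.2.2 = gdu ≥ q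
      have h1 : gdu ≤ gOf c s + ts.cost t.2.1 := by
        rw [← hgdu, hstable]; exact hBB
      have h2 : q = gOf c s + ts.cost t.2.1 := by rw [heq, hgds, hgcs]
      have h3 : gdu ≤ q := h2 ▸ h1
      exact le_antisymm ((hsome gdu pdu hdu).1) h3 ▸ by rw [hgdu]
  -- common facts for all four scenarios
  have hknownMono' : c.known ⊆ insert t.2.2 d.known :=
    hd.knownMono.trans (Set.subset_insert _ _)
  have hkinit' : ts.init ∈ insert t.2.2 d.known := Set.mem_insert_of_mem _ hd.kinit
  have hgcstable' : ∀ u ∈ c.closed,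
      ((parUpd ts d.par t u).map Prod.fst).getD 0 = gOf c u ∨
        h u (σh.update d.info t) = ⊤ := by
    intro u hu
    by_cases hx : u = t.2.2
    · subst hx
      by_cases htop : h t.2.2 (σh.update d.info t) = ⊤
      · exact Or.inr htop
      · obtain ⟨h1, h2⟩ := hKEY hu htop
        exact Or.inl (by rw [hgnew, h1, h2])
    · rw [parUpd_ne hx]
      rcases hd.gclosedStable u hu with hst | hst
      · exact Or.inl hst
      · exact Or.inr (top_le_iff.1 (hst ▸ h_mono_update hmono hreachd ht u))
  have hopen_pres : ∀ x, x ∈ d.known → x ≠ t.2.2 → x ∉ d.closed →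
      (∃ en ∈ d.openq, en.1 = x ∧
          en.2.1 = ((parUpd ts d.par t x).map Prod.fst).getD 0 ∧
          en.2.2 ≤ h x (σh.update d.info t)) ∨ h x (σh.update d.info t) = ⊤ := by
    intro x hx hne hncl
    rw [parUpd_ne hne]
    rcases hd.openInv x hx hncl with ⟨en, hen, h1, h2, h3⟩ | htp
    · exact Or.inl ⟨en, hen, h1, h2, le_trans h3 (h_mono_update hmono hreachd ht x)⟩
    · exact Or.inr (top_le_iff.1 (htp ▸ h_mono_update hmono hreachd ht x))
  have hentries' : ∀ en ∈ d.openq, en.1 ∈ insert t.2.2 d.known ∧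
      ((parUpd ts d.par t en.1).map Prod.fst).getD 0 ≤ en.2.1 ∧ en.2.2 ≠ ⊤ := by
    intro en hen
    obtain ⟨h1, h2, h3⟩ := hd.entries en hen
    refine ⟨Set.mem_insert_of_mem _ h1, ?_, h3⟩
    obtain ⟨g, p, hg⟩ : ∃ g p, d.par en.1 = some (g, p) := by
      rcases Option.isSome_iff_exists.1 ((hd.parKnown en.1).1 h1) with ⟨⟨g, p⟩, hg⟩
      exact ⟨g, p, hg⟩
    obtain ⟨g', p', hg', hle⟩ := hstep_parMono en.1 g p hg
    have h4 : g ≤ en.2.1 := by rw [gOf_eq hg] at h2; exact h2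
    rw [hg']
    exact le_trans hle h4
  have hqbound : q ≤ gOf c s + ts.cost t.2.1 := by rw [hgcs, ← hgds]; exact hqle
  by_cases htop : h t.2.2 (σh.update d.info t) = ⊤
  · rw [procSucc_top htop]
    refine ⟨⟨hd.closedEq, hknownMono', hkinit', hgzero', hd.closedKnown.trans
        (Set.subset_insert _ _), hparKnown', hreach', hgsEq', hparMono', hmonoAll',
        hgcstable', hgpath', ?_, hentries'⟩, hstep_parMono, ⟨q, p2, hq, hqbound⟩,
      Set.mem_insert _ _⟩
    · intro x hx hncl
      by_cases hne : x = t.2.2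
      · subst hne; exact Or.inr htop
      · rcases hx with hx | hx
        · exact absurd hx hne
        · exact hopen_pres x hx hne hncl
  · have hopen_new : ∀ x, x ∈ insert t.2.2 d.known →
        x ∉ d.closed →
        (∃ en ∈ ((t.2.2, ((parUpd ts d.par t t.2.2).map Prod.fst).getD 0,
              h t.2.2 (σh.update d.info t)) ::ₘ d.openq), en.1 = x ∧
            en.2.1 = ((parUpd ts d.par t x).map Prod.fst).getD 0 ∧
            en.2.2 ≤ h x (σh.update d.info t)) ∨ h x (σh.update d.info t) = ⊤ := by
      intro x hx hncl
      by_cases hne : x = t.2.2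
      · subst hne
        exact Or.inl ⟨_, Multiset.mem_cons_self _ _, rfl, rfl, le_refl _⟩
      · rcases hx with hx | hx
        · exact absurd hx hne
        · rcases hopen_pres x hx hne hncl with ⟨en, hen, hh⟩ | htp
          · exact Or.inl ⟨en, Multiset.mem_cons_of_mem hen, hh⟩
          · exact Or.inr htp
    have hentries_new : ∀ en ∈ ((t.2.2, ((parUpd ts d.par t t.2.2).map Prod.fst).getD 0,
          h t.2.2 (σh.update d.info t)) ::ₘ d.openq),
        en.1 ∈ insert t.2.2 d.known ∧
        ((parUpd ts d.par t en.1).map Prod.fst).getD 0 ≤ en.2.1 ∧ en.2.2 ≠ ⊤ := by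
      intro en hen
      rcases Multiset.mem_cons.1 hen with rfl | hen
      · exact ⟨Set.mem_insert _ _, le_refl _, htop⟩
      · exact hentries' en hen
    by_cases hk : t.2.2 ∈ d.known
    · obtain ⟨gdu, pdu, hdu⟩ : ∃ g p, d.par t.2.2 = some (g, p) := by
        rcases Option.isSome_iff_exists.1 ((hd.parKnown t.2.2).1 hk) with ⟨⟨g, p⟩, hg⟩
        exact ⟨g, p, hg⟩
      by_cases hlt : ((parUpd ts d.par t t.2.2).map Prod.fst).getD 0 < gOf d t.2.2
      · -- possible reopening: show the target is not closed
        have hnotcl : t.2.2 ∉ d.closed := by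
          intro hin
          rw [hd.closedEq] at hin
          rcases hin with hin | hin
          · -- t.2.2 = s : the g-value of s cannot decrease
            have hds' : d.par t.2.2 = some (gds, pds) := by rw [hin]; exact hds
            have hqs : q = gds := by
              rcases (hsome gds pds hds').2 with heq | heq
              · exact heq
              · exact le_antisymm (hsome gds pds hds').1 (by rw [heq]; exact le_self_add)
            rw [hgnew, hqs, gOf_eq hds'] at hlt
            exact lt_irrefl _ hlt
          · obtain ⟨h1, _⟩ := hKEY hin htop
            rw [hgnew, h1] at hlt
            exact lt_irrefl _ hlt
        rw [procSucc_known_lt htop hk hlt, Set.diff_singleton_eq_self hnotcl]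
        exact ⟨⟨hd.closedEq, hknownMono', hkinit', hgzero', hd.closedKnown.trans
            (Set.subset_insert _ _), hparKnown', hreach', hgsEq', hparMono', hmonoAll',
            hgcstable', hgpath', fun x hx hncl => hopen_new x hx hncl, hentries_new⟩,
          hstep_parMono, ⟨q, p2, hq, hqbound⟩, Set.mem_insert _ _⟩
      · rw [procSucc_known_ge htop hk hlt]
        have hqeq : q = gOf d t.2.2 := by
          refine le_antisymm ?_ ?_
          · rw [gOf_eq hdu]; exact (hsome gdu pdu hdu).1
          · rw [← hgnew]; exact not_lt.1 hlt
        refine ⟨⟨hd.closedEq, hknownMono', hkinit', hgzero', hd.closedKnown.trans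
            (Set.subset_insert _ _), hparKnown', hreach', hgsEq', hparMono', hmonoAll',
            hgcstable', hgpath', ?_, hentries'⟩, hstep_parMono, ⟨q, p2, hq, hqbound⟩,
          Set.mem_insert _ _⟩
        · intro x hx hncl
          by_cases hne : x = t.2.2
          · subst hne
            rcases hd.openInv t.2.2 hk hncl with ⟨en, hen, h1, h2, h3⟩ | htp
            · refine Or.inl ⟨en, hen, h1, ?_, le_trans h3
                (h_mono_update hmono hreachd ht t.2.2)⟩
              rw [h2, ← hqeq, ← hgnew]
              rfl
            · exact Or.inr (top_le_iff.1 (htp ▸ h_mono_update hmono hreachd ht t.2.2))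
          · rcases hx with hx | hx
            · exact absurd hx hne
            · exact hopen_pres x hx hne hncl
    · rw [procSucc_new htop hk]
      exact ⟨⟨hd.closedEq, hknownMono', hkinit', hgzero', hd.closedKnown.trans
          (Set.subset_insert _ _), hparKnown', hreach', hgsEq', hparMono', hmonoAll',
          hgcstable', hgpath', fun x hx hncl => hopen_new x hx hncl, hentries_new⟩,
        hstep_parMono, ⟨q, p2, hq, hqbound⟩, Set.mem_insert _ _⟩


lemma expandAll_cons (d : AConfig S L I) (t : Tran S L) (l : List (Tran S L)) :
    expandAll ts σh h d (t :: l) = expandAll ts σh h (procSucc ts σh h d t) l := rfl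

lemma fold_spec (hmono : DynMonotonic ts σh h)
    (hc : AInv ts σh h c) (hsK : s ∈ c.known) (hscl : s ∉ c.closed)
    (HB : ∀ t : Tran S L, t ∈ ts.trans → t.1 = s → t.2.2 ∈ c.closed →
      h t.2.2 c.info ≠ ⊤ → gOf c t.2.2 ≤ gOf c s + ts.cost t.2.1) :
    ∀ (l : List (Tran S L)) (d : AConfig S L I), DInv ts σh h c s d →
    (∀ t' ∈ l, t' ∈ ts.trans ∧ t'.1 = s) →
    DInv ts σh h c s (expandAll ts σh h d l) ∧
    (∀ u g p, d.par u = some (g, p) →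
      ∃ g' p', (expandAll ts σh h d l).par u = some (g', p') ∧ g' ≤ g) ∧
    (∀ t' ∈ l, ∃ g' p', (expandAll ts σh h d l).par t'.2.2 = some (g', p') ∧
      g' ≤ gOf c s + ts.cost t'.2.1) := by
  intro l
  induction l with
  | nil => exact fun d hd _ => ⟨hd, fun u g p hu => ⟨g, p, hu, le_refl _⟩, by simp⟩
  | cons t l ih =>
    intro d hd hl
    obtain ⟨ht, ht1⟩ := hl t List.mem_cons_self
    obtain ⟨hd', hstep, ⟨q, p2, hq, hqb⟩, _⟩ := procSucc_spec hmono hc hsK hscl HB hd ht ht1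
    obtain ⟨hfin, hmono2, hbound⟩ := ih (procSucc ts σh h d t) hd'
      (fun t' ht' => hl t' (List.mem_cons_of_mem _ ht'))
    refine ⟨hfin, ?_, ?_⟩
    · intro u g p hu
      obtain ⟨g1, p1, h1, hle1⟩ := hstep u g p hu
      obtain ⟨g2, pp2, h2, hle2⟩ := hmono2 u g1 p1 h1
      exact ⟨g2, pp2, h2, le_trans hle2 hle1⟩
    · intro t' ht'
      rcases List.mem_cons.1 ht' with rfl | ht'
      · obtain ⟨g2, pp2, h2, hle2⟩ := hmono2 t'.2.2 q p2 hq
        exact ⟨g2, pp2, h2, le_trans hle2 hqb⟩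
      · exact hbound t' ht'

end NoReopenProof3

section NoReopenProof4

variable {S L I : Type} {ts : TransSys S L} {σh : InfoSource ts I} {h : S → I → ℝ≥0∞}

lemma initInv : AInv ts σh h (initAConfig ts σh h) := by
  classical
  refine ⟨rfl, ?_, InfoSource.ReachWith.base, ?_, Set.empty_subset _, ?_, ?_, ?_, ?_, ?_⟩
  · show gOf (initAConfig ts σh h) ts.init = 0
    simp [initAConfig, gOf, Option.getD]
  · intro u
    by_cases hu : u = ts.init <;> simp [initAConfig, hu]
  · intro u hu
    have hu' : u = ts.init := hu
    subst hu'
    refine ⟨[], .nil _, ?_⟩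
    show (0 : NNReal) = gOf (initAConfig ts σh h) ts.init
    simp [initAConfig, gOf, Option.getD]
  · intro u hu; exact absurd hu (Set.notMem_empty u)
  · intro u hu; exact absurd hu (Set.notMem_empty u)
  · intro x hx _
    have hx' : x = ts.init := hx
    subst hx'
    by_cases htop : h ts.init σh.initInfo = ⊤
    · exact Or.inr htop
    · refine Or.inl ⟨(ts.init, 0, h ts.init σh.initInfo), ?_, rfl, ?_, le_refl _⟩
      · show _ ∈ (initAConfig ts σh h).openq
        simp [initAConfig, htop]
      · show (0 : NNReal) = gOf (initAConfig ts σh h) ts.init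
        simp [initAConfig, gOf, Option.getD]
  · intro en hen
    by_cases htop : h ts.init σh.initInfo = ⊤
    · have : (initAConfig ts σh h).openq = 0 := by simp [initAConfig, htop]
      rw [this] at hen
      exact absurd hen (Multiset.notMem_zero _)
    · have : (initAConfig ts σh h).openq = {(ts.init, 0, h ts.init σh.initInfo)} := by
        simp [initAConfig, htop]
      rw [this, Multiset.mem_singleton] at hen
      subst hen
      refine ⟨rfl, ?_, htop⟩
      show gOf (initAConfig ts σh h) ts.init ≤ 0
      simp [initAConfig, gOf, Option.getD]

lemma stepInv (hmono : DynMonotonic ts σh h) (hcons : DynConsistent ts σh h)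
    {c c' : AConfig S L I} {lab : ALab S L}
    (hc : AInv ts σh h c) (hst : AStep ts σh h true c lab (.cont c')) :
    AInv ts σh h c' ∧ c.closed ⊆ c'.closed := by
  classical
  have hreachc : σh.ReachableInfo c.info := ⟨_, hc.reach⟩
  cases hst with
  | dup hq hmin hcl =>
    rename_i en rest
    refine ⟨⟨hc.kinit, hc.gzero, hc.reach, hc.parKnown, hc.closedKnown, hc.gpath,
        hc.gclosed, hc.locCons, ?_, ?_⟩, le_refl _⟩
    · intro x hx hncl
      rcases hc.openInv x hx hncl with ⟨en2, hen2, h1, h2, h3⟩ | htp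
      · rw [hq] at hen2
        rcases Multiset.mem_cons.1 hen2 with rfl | hen2
        · exact absurd (h1 ▸ hcl) hncl
        · exact Or.inl ⟨en2, hen2, h1, h2, h3⟩
      · exact Or.inr htp
    · intro en2 hen2
      exact hc.entries en2 (by rw [hq]; exact Multiset.mem_cons_of_mem hen2)
  | reevFin hq hmin hncl hre hlt hfin =>
    rename_i en rest
    have hsK : en.1 ∈ c.known := (hc.entries en (by rw [hq]; exact Multiset.mem_cons_self _ _)).1
    have hmF : ∀ x, h x c.info ≤ h x (σh.refine c.info en.1) :=
      fun x => h_mono_refine hmono hreachc x en.1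
    refine ⟨⟨hc.kinit, hc.gzero, hc.reach.refine hsK, hc.parKnown, hc.closedKnown, hc.gpath,
        ?_, ?_, ?_, ?_⟩, le_refl _⟩
    · intro u hu
      rcases hc.gclosed u hu with hreal | htp
      · exact Or.inl hreal
      · exact Or.inr (top_le_iff.1 (htp ▸ hmF u))
    · intro w hw t ht ht1
      rcases hc.locCons w hw t ht ht1 with hreal | htp
      · exact Or.inl hreal
      · exact Or.inr (top_le_iff.1 (htp ▸ hmF w))
    · intro x hx hncl'
      rcases hc.openInv x hx hncl' with ⟨en2, hen2, h1, h2, h3⟩ | htp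
      · rw [hq] at hen2
        rcases Multiset.mem_cons.1 hen2 with rfl | hen2
        · subst h1
          exact Or.inl ⟨(en2.1, gOf c en2.1, h en2.1 (σh.refine c.info en2.1)),
            Multiset.mem_cons_self _ _, rfl, rfl, le_refl _⟩
        · exact Or.inl ⟨en2, Multiset.mem_cons_of_mem hen2, h1, h2, le_trans h3 (hmF x)⟩
      · exact Or.inr (top_le_iff.1 (htp ▸ hmF x))
    · intro en2 hen2
      rcases Multiset.mem_cons.1 hen2 with rfl | hen2
      · exact ⟨hsK, le_refl _, hfin⟩
      · exact hc.entries en2 (by rw [hq]; exact Multiset.mem_cons_of_mem hen2)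
  | reevInf hq hmin hncl hre hlt htop =>
    rename_i en rest
    have hsK : en.1 ∈ c.known := (hc.entries en (by rw [hq]; exact Multiset.mem_cons_self _ _)).1
    have hmF : ∀ x, h x c.info ≤ h x (σh.refine c.info en.1) :=
      fun x => h_mono_refine hmono hreachc x en.1
    refine ⟨⟨hc.kinit, hc.gzero, hc.reach.refine hsK, hc.parKnown, hc.closedKnown, hc.gpath,
        ?_, ?_, ?_, ?_⟩, le_refl _⟩
    · intro u hu
      rcases hc.gclosed u hu with hreal | htp
      · exact Or.inl hreal
      · exact Or.inr (top_le_iff.1 (htp ▸ hmF u))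
    · intro w hw t ht ht1
      rcases hc.locCons w hw t ht ht1 with hreal | htp
      · exact Or.inl hreal
      · exact Or.inr (top_le_iff.1 (htp ▸ hmF w))
    · intro x hx hncl'
      rcases hc.openInv x hx hncl' with ⟨en2, hen2, h1, h2, h3⟩ | htp
      · rw [hq] at hen2
        rcases Multiset.mem_cons.1 hen2 with rfl | hen2
        · exact Or.inr (h1 ▸ htop)
        · exact Or.inl ⟨en2, hen2, h1, h2, le_trans h3 (hmF x)⟩
      · exact Or.inr (top_le_iff.1 (htp ▸ hmF x))
    · intro en2 hen2
      exact hc.entries en2 (by rw [hq]; exact Multiset.mem_cons_of_mem hen2)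
  | expand hq hmin hncl hnore hng hsl =>
    rename_i en rest l
    have henq : en ∈ c.openq := by rw [hq]; exact Multiset.mem_cons_self _ _
    obtain ⟨hsK, hgle, hentop⟩ := hc.entries en henq
    have hre : h en.1 (σh.refine c.info en.1) ≤ en.2.2 := by
      by_contra hcon
      exact hnore ⟨rfl, not_le.1 hcon⟩
    have hNC : ∀ π, ts.IsPathFrom ts.init π en.1 →
        (gOf c en.1 : ℝ≥0∞) ≤ (ts.pathCost π : ℝ≥0∞) :=
      noCheap hmono hcons hc hmin henq hre
    have HB : ∀ t : Tran S L, t ∈ ts.trans → t.1 = en.1 → t.2.2 ∈ c.closed →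
        h t.2.2 c.info ≠ ⊤ → gOf c t.2.2 ≤ gOf c en.1 + ts.cost t.2.1 := by
      intro t ht ht1 hu hny
      rcases hc.gclosed t.2.2 hu with hreal | htp
      · obtain ⟨πs, hπs, hπc⟩ := hc.gpath en.1 hsK
        have hb := hreal (πs ++ [t]) (pathFrom_snoc hπs ht ht1)
        rw [pathCost_append, pathCost_single, hπc] at hb
        exact_mod_cast hb
      · exact absurd htp hny
    have hd0 : DInv ts σh h c en.1
        { c with openq := rest, closed := insert en.1 c.closed,
                 info := σh.refine c.info en.1 } := by
      refine ⟨rfl, le_refl _, hc.kinit, hc.gzero, ?_, hc.parKnown, hc.reach.refine hsK,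
        rfl, fun u g p hu => ⟨g, p, hu, le_refl _⟩,
        fun x => h_mono_refine hmono hreachc x en.1, fun u _ => Or.inl rfl, hc.gpath,
        ?_, ?_⟩
      · exact Set.insert_subset_iff.2 ⟨hsK, hc.closedKnown⟩
      · intro x hx hncl'
        have hxs : x ≠ en.1 := fun he => hncl' (he ▸ Set.mem_insert _ _)
        have hxc : x ∉ c.closed := fun hin => hncl' (Set.mem_insert_of_mem _ hin)
        rcases hc.openInv x hx hxc with ⟨en2, hen2, h1, h2, h3⟩ | htp
        · rw [hq] at hen2
          rcases Multiset.mem_cons.1 hen2 with rfl | hen2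
          · exact absurd h1 (fun he => hxs he.symm)
          · exact Or.inl ⟨en2, hen2, h1, h2,
              le_trans h3 (h_mono_refine hmono hreachc x en.1)⟩
        · exact Or.inr (top_le_iff.1 (htp ▸ h_mono_refine hmono hreachc x en.1))
      · intro en2 hen2
        exact hc.entries en2 (by rw [hq]; exact Multiset.mem_cons_of_mem hen2)
    obtain ⟨hdf, hmonof, hboundf⟩ := fold_spec hmono hc hsK hncl HB l _ hd0
      (fun t' ht' => (hsl.2 t').1 ht')
    set E := expandAll ts σh h
      { c with openq := rest, closed := insert en.1 c.closed,
               info := σh.refine c.info en.1 } l with hE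
    have hgEs : gOf E en.1 = gOf c en.1 := by
      show ((E.par en.1).map Prod.fst).getD 0 = ((c.par en.1).map Prod.fst).getD 0
      rw [hdf.gsEq]
    have hgdec : ∀ u, u ∈ c.known → gOf E u ≤ gOf c u := by
      intro u hu
      obtain ⟨⟨g, p⟩, hg⟩ := Option.isSome_iff_exists.1 ((hc.parKnown u).1 hu)
      obtain ⟨g', p', hg', hle⟩ := hdf.parMono u g p hg
      rw [gOf_eq hg, gOf_eq hg']
      exact hle
    refine ⟨⟨hdf.kinit, hdf.gzero, hdf.reach, hdf.parKnown, hdf.closedKnown, hdf.gpath,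
        ?_, ?_, hdf.openInv, hdf.entries⟩, ?_⟩
    · -- gclosed
      intro u hu
      rw [hdf.closedEq] at hu
      rcases hu with rfl | hu
      · exact Or.inl (fun π hπ => by rw [hgEs]; exact hNC π hπ)
      · rcases hc.gclosed u hu with hreal | htp
        · refine Or.inl (fun π hπ => le_trans ?_ (hreal π hπ))
          exact_mod_cast hgdec u (hc.closedKnown hu)
        · exact Or.inr (top_le_iff.1 (htp ▸ hdf.hmonoAll u))
    · -- locCons
      intro w hw t ht ht1
      rw [hdf.closedEq] at hw
      rcases hw with rfl | hw
      · obtain ⟨g', p', hg', hgb⟩ := hboundf t ((hsl.2 t).2 ⟨ht, ht1⟩)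
        refine Or.inl ⟨(hdf.parKnown t.2.2).2 (by rw [hg']; rfl), ?_⟩
        rw [gOf_eq hg', hgEs]
        exact hgb
      · rcases hc.locCons w hw t ht ht1 with ⟨hK, hg⟩ | htp
        · rcases hdf.gclosedStable w hw with hst | hst
          · exact Or.inl ⟨hdf.knownMono hK, by
              rw [hst]; exact le_trans (hgdec t.2.2 hK) hg⟩
          · exact Or.inr hst
        · exact Or.inr (top_le_iff.1 (htp ▸ hdf.hmonoAll w))
    · -- closed monotone
      rw [hdf.closedEq]
      exact Set.subset_insert _ _

end NoReopenProof4

/-! ## Statement 15 -/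


theorem stmt15 {S L I : Type} [Fintype S] [Fintype L]
    (ts : TransSys S L) (σh : InfoSource ts I) (h : S → I → ℝ≥0∞)
    (hmono : DynMonotonic ts σh h) (hcons : DynConsistent ts σh h)
    (e : ℕ → AConfig S L I) (lab : ℕ → ALab S L) (N : ℕ)
    (hexec : IsExec ts σh h true e lab N) :
    ∀ n < N, (e n).closed ⊆ (e (n + 1)).closed := by
  
  have inv : ∀ n, n ≤ N → AInv ts σh h (e n) := by
    intro n
    induction n with
    | zero => intro _; rw [hexec.1]; exact initInv
    | succ k ih =>
      intro hk
      exact (stepInv hmono hcons (ih (Nat.le_of_succ_le hk))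
        (hexec.2 k (Nat.lt_of_succ_le hk))).1
  intro n hn
  exact (stepInv hmono hcons (inv n (le_of_lt hn)) (hexec.2 n hn)).2
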